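/- arXiv:2601.02664 — 5 statements merged into one kernel-verified Lean document; each statement's English description precedes it below -/
import Mathlib

section
/- Let p be an odd prime, q a power of p, and k ≥ 0. Then the Fibonacci polynomial F_{p^k}(T), reduced modulo p, equals (T^2 + 4)^{(p^k - 1)/2} in F_q[T]. -/
open Polynomial

noncomputable def fibPoly (R : Type*) [CommRing R] : ℕ → Polynomial R
  | 0 => 0
  | 1 => 1
  | n + 2 => Polynomial.X * fibPoly R (n + 1) + fibPoly R n

/-!
Binet's formula: if `a² = x a + 1`, so that `a` and `b = x - a` are the two roots of
`Y² - x Y - 1`, then `F_n(x) (a - b) = aⁿ - bⁿ`, and `(a - b)² = x² + 4`. In characteristic `p`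
the Frobenius gives `a^{p^k} - b^{p^k} = (a - b)^{p^k}`, hence
`F_{p^k}(x) (x² + 4) = (a - b)^{p^k + 1} = (x² + 4)^{(p^k + 1)/2}`.
Take `x = X` and `a` a root of `Y² - X Y - 1` adjoined to `F[X]`, then cancel `X² + 4` in `F[X]`.
-/

section Binet

variable {R A : Type*} [CommRing R] [CommRing A] [Algebra R A] {x a : A}

theorem aeval_fibPoly_mul_sub (ha : a ^ 2 = x * a + 1) :
    ∀ n : ℕ, aeval x (fibPoly R n) * (a - (x - a)) = a ^ n - (x - a) ^ n
  | 0 => by simp [fibPoly]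
  | 1 => by simp [fibPoly]
  | n + 2 => by
    simp only [fibPoly, map_add, map_mul, aeval_X]
    linear_combination x * aeval_fibPoly_mul_sub ha (n + 1) + aeval_fibPoly_mul_sub ha n +
      (-a ^ n + (x - a) ^ n) * ha

theorem aeval_fibPoly_pow_mul {p : ℕ} [ExpChar A p] (hp : Odd p) (ha : a ^ 2 = x * a + 1)
    (k : ℕ) :
    aeval x (fibPoly R (p ^ k)) * (x ^ 2 + 4) = (x ^ 2 + 4) ^ ((p ^ k + 1) / 2) := by
  have hsq : (a - (x - a)) ^ 2 = x ^ 2 + 4 := by linear_combination 4 * ha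
  have hfrob : aeval x (fibPoly R (p ^ k)) * (a - (x - a)) = (a - (x - a)) ^ p ^ k := by
    rw [aeval_fibPoly_mul_sub ha, ← sub_pow_expChar_pow]
  obtain ⟨t, ht⟩ := hp.pow (n := k)
  calc aeval x (fibPoly R (p ^ k)) * (x ^ 2 + 4)
      = (a - (x - a)) ^ (p ^ k + 1) := by rw [← hsq, sq, ← mul_assoc, hfrob, pow_succ]
    _ = (x ^ 2 + 4) ^ ((p ^ k + 1) / 2) := by
        rw [← hsq, ← pow_mul]
        congr 1
        omega

end Binet

section FibCharPoly

variable (R : Type*) [CommRing R]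

noncomputable def fibCharPoly : R[X][X] := X ^ 2 - C X * X - 1

theorem degree_fibCharPoly [Nontrivial R] : (fibCharPoly R).degree = 2 := by
  unfold fibCharPoly
  compute_degree!

theorem algebraMap_adjoinRoot_fibCharPoly_injective [IsDomain R] :
    Function.Injective (algebraMap R[X] (AdjoinRoot (fibCharPoly R))) :=
  AdjoinRoot.of.injective_of_degree_ne_zero (by rw [degree_fibCharPoly]; decide)

theorem root_fibCharPoly_sq :
    AdjoinRoot.root (fibCharPoly R) ^ 2 =
      algebraMap R[X] _ X * AdjoinRoot.root (fibCharPoly R) + 1 := by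
  have h : (X ^ 2 - C X * X - 1 : R[X][X]).eval₂ (AdjoinRoot.of (fibCharPoly R))
      (AdjoinRoot.root (fibCharPoly R)) = 0 := AdjoinRoot.eval₂_root _
  simp only [eval₂_sub, eval₂_pow, eval₂_mul, eval₂_X, eval₂_C, eval₂_one] at h
  rw [AdjoinRoot.algebraMap_eq]
  linear_combination h

end FibCharPoly

theorem fib_poly_prime_pow_general (p : ℕ) [Fact p.Prime] (hp : Odd p)
    (F : Type*) [Field F] [CharP F p] (k : ℕ) :
    fibPoly F (p ^ k) = (X ^ 2 + C 4) ^ ((p ^ k - 1) / 2) := by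
  have hinj := algebraMap_adjoinRoot_fibCharPoly_injective F
  have : CharP (AdjoinRoot (fibCharPoly F)) p := by
    refine charP_of_injective_algebraMap (R := F) ?_ p
    rw [IsScalarTower.algebraMap_eq F F[X]]
    exact hinj.comp C_injective
  have key := aeval_fibPoly_pow_mul (R := F) hp (root_fibCharPoly_sq F) k
  rw [aeval_algebraMap_apply, aeval_X_left_apply] at key
  have hne : (X ^ 2 + C 4 : F[X]) ≠ 0 := X_pow_add_C_ne_zero two_pos 4
  refine mul_right_cancel₀ hne (hinj ?_)
  have hexp : (p ^ k - 1) / 2 + 1 = (p ^ k + 1) / 2 := by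
    have := (hp.pow (n := k)).pos
    omega
  rw [← pow_succ, hexp]
  simpa [map_ofNat] using key

theorem fib_poly_prime_pow (p : ℕ) [Fact p.Prime] (hp : Odd p)
    (F : Type*) [Field F] [Fintype F] [CharP F p] (k : ℕ) :
    fibPoly F (p ^ k) = (X ^ 2 + C 4) ^ ((p ^ k - 1) / 2) :=
  fib_poly_prime_pow_general p hp F k
end

section
/- Let p be a prime, q a power of p, and write n = p^k · m with gcd(m, p) = 1. Then in F_q[T], the Fibonacci polynomial satisfies F_n(T) = F_{p^k}(T) · F_m(T)^{p^k}. -/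
/-! With `M = !![X, 1; 1, 0]` one has `M ^ (n + 1) = F_{n+1} • M + F_n • 1`, so `F_n` is the
top-right entry of `M ^ n`. The two summands commute, so in characteristic `p` the Frobenius
acts termwise: `M ^ (p n) = F_n ^ p • M ^ p + F_{n-1} ^ p • 1`, whose top-right entry is
`F_n ^ p F_p`. Iterating `F_{p n} = F_p F_n ^ p` gives the factorisation. -/

open Polynomial

section CommRing

variable (R : Type*) [CommRing R]

noncomputable def fibMat : Matrix (Fin 2) (Fin 2) R[X] :=
  !![X, 1; 1, 0]

lemma fibMat_sq : fibMat R ^ 2 = (X : R[X]) • fibMat R + 1 := by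
  ext i j
  fin_cases i <;> fin_cases j <;> simp [fibMat, pow_two]

lemma fibMat_pow_succ (n : ℕ) :
    fibMat R ^ (n + 1) = fibPoly R (n + 1) • fibMat R + fibPoly R n • 1 := by
  induction n with
  | zero => simp [fibPoly]
  | succ n ih =>
    rw [pow_succ, ih, add_mul, Matrix.smul_mul, Matrix.smul_mul, one_mul, ← pow_two,
      fibMat_sq, fibPoly]
    module

lemma smul_fibMat_add_smul_one_apply_zero_one (a b : R[X]) :
    (a • fibMat R + b • (1 : Matrix (Fin 2) (Fin 2) R[X])) 0 1 = a := by
  simp [fibMat]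

lemma fibMat_pow_apply_zero_one (n : ℕ) : (fibMat R ^ n) 0 1 = fibPoly R n := by
  rcases n with _ | n
  · simp [fibPoly]
  · rw [fibMat_pow_succ, smul_fibMat_add_smul_one_apply_zero_one]

variable (p : ℕ) [Fact p.Prime] [CharP R p]

lemma fibPoly_prime_mul (n : ℕ) : fibPoly R (p * n) = fibPoly R p * fibPoly R n ^ p := by
  have hp := (Fact.out : p.Prime)
  rcases n with _ | n
  · simp [fibPoly, hp.ne_zero]
  have hMp : fibMat R ^ p = fibPoly R p • fibMat R + fibPoly R (p - 1) • 1 := by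
    simpa [Nat.sub_add_cancel hp.one_le] using fibMat_pow_succ R (p - 1)
  have hcomm : Commute (fibPoly R (n + 1) • fibMat R)
      (fibPoly R n • (1 : Matrix (Fin 2) (Fin 2) R[X])) :=
    ((Commute.one_right _).smul_right _).smul_left _
  set a := fibPoly R (n + 1)
  calc fibPoly R (p * (n + 1))
      = (fibMat R ^ (p * (n + 1))) 0 1 := (fibMat_pow_apply_zero_one R _).symm
    _ = (a ^ p • fibMat R ^ p + fibPoly R n ^ p • 1) 0 1 := by
      rw [pow_mul', fibMat_pow_succ, add_pow_char_of_commute _ hcomm, _root_.smul_pow,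
        _root_.smul_pow, one_pow]
    _ = ((a ^ p * fibPoly R p) • fibMat R
          + (a ^ p * fibPoly R (p - 1) + fibPoly R n ^ p) • 1) 0 1 := by
      rw [hMp, smul_add, smul_smul, smul_smul, add_assoc, ← add_smul]
    _ = fibPoly R p * a ^ p := by
      rw [smul_fibMat_add_smul_one_apply_zero_one, mul_comm]

lemma fibPoly_prime_pow_mul (k n : ℕ) :
    fibPoly R (p ^ k * n) = fibPoly R (p ^ k) * fibPoly R n ^ p ^ k := by
  induction k with
  | zero => simp [fibPoly]
  | succ k ih =>
    rw [pow_succ', mul_assoc, fibPoly_prime_mul, ih, fibPoly_prime_mul]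
    ring

end CommRing

theorem fib_poly_factor_general (p : ℕ) [Fact p.Prime]
    (F : Type*) [Field F] [CharP F p] (k m : ℕ) :
    fibPoly F (p ^ k * m) = fibPoly F (p ^ k) * (fibPoly F m) ^ (p ^ k) :=
  fibPoly_prime_pow_mul F p k m

theorem fib_poly_factor (p : ℕ) [Fact p.Prime]
    (F : Type*) [Field F] [Fintype F] [CharP F p] (k m : ℕ) (hm : Nat.Coprime m p) :
    fibPoly F (p ^ k * m) = fibPoly F (p ^ k) * (fibPoly F m) ^ (p ^ k) :=
  fib_poly_factor_general p F k m
end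

section
/- Let p be an odd prime, q a power of p, and m a positive integer with p ∤ m. Then the Fibonacci polynomial F_m(T) is square-free in F_q[T]. -/
/-!
With `F = F_{n+1}` and `L = X F_{n+1} + 2 F_n` (the Lucas polynomial `L_{n+1}`), Cassini's identity
gives `L² - (X² + 4) F² = 4 (-1)^(n+1)`, and `F` satisfies the differential identity
`(X² + 4) F' = n X F + 2 (n + 1) F_n`. Eliminating `F_n` yields a Bézout relation
`A F + B F' = 4 (n + 1) (-1)^(n+1)`, whose right-hand side is a unit when `2` and `n + 1` are
invertible. So `F` is separable, hence square-free.
-/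

open Polynomial

namespace fibPoly

variable {R : Type*} [CommRing R]

theorem add_two (n : ℕ) : fibPoly R (n + 2) = X * fibPoly R (n + 1) + fibPoly R n := rfl

theorem cassini (n : ℕ) :
    fibPoly R (n + 2) * fibPoly R n - fibPoly R (n + 1) ^ 2 = (-1) ^ (n + 1) := by
  induction n with
  | zero => simp [fibPoly]
  | succ n ih =>
    rw [add_two (n + 1), add_two n] at *
    linear_combination -ih

theorem sq_sub_X_sq_add_four_mul_sq (n : ℕ) :
    (X * fibPoly R (n + 1) + 2 * fibPoly R n) ^ 2 - (X ^ 2 + 4) * fibPoly R (n + 1) ^ 2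
      = 4 * (-1) ^ (n + 1) := by
  linear_combination 4 * cassini (R := R) n - 4 * fibPoly R n * add_two (R := R) n

theorem X_sq_add_four_mul_derivative : ∀ n : ℕ,
    (X ^ 2 + 4) * derivative (fibPoly R (n + 1))
      = (n : R[X]) * X * fibPoly R (n + 1) + 2 * ((n : R[X]) + 1) * fibPoly R n
  | 0 => by simp [fibPoly]
  | 1 => by simp [fibPoly]; ring
  | n + 2 => by
    have h₀ := X_sq_add_four_mul_derivative n
    have h₁ := X_sq_add_four_mul_derivative (n + 1)
    rw [add_two (n + 1), derivative_add, derivative_mul, derivative_X]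
    rw [add_two n] at h₁ ⊢
    push_cast at h₁ ⊢
    linear_combination X * h₁ + h₀

theorem separable {n : ℕ} (h₂ : IsUnit (2 : R)) (hn : IsUnit ((n + 1 : ℕ) : R)) :
    (fibPoly R (n + 1)).Separable := by
  set f := fibPoly R (n + 1)
  set L := X * f + 2 * fibPoly R n
  have bezout : (X * L - ((n : R[X]) + 1) * (X ^ 2 + 4) * f) * f + L * (X ^ 2 + 4) * derivative f
      = C (4 * ((n : R) + 1) * (-1) ^ (n + 1)) := by
    simp only [map_mul, map_pow, map_neg, map_one, map_add, map_natCast, map_ofNat]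
    linear_combination L * X_sq_add_four_mul_derivative (R := R) n
      + (n + 1) * sq_sub_X_sq_add_four_mul_sq (R := R) n
  obtain ⟨u, hu⟩ : IsUnit (4 * ((n : R) + 1) * (-1) ^ (n + 1)) := by
    rw [show (4 : R) = 2 * 2 by norm_num]
    push_cast at hn
    exact ((h₂.mul h₂).mul hn).mul (isUnit_neg_one.pow _)
  have hCu : C (↑u⁻¹ : R) * C (4 * ((n : R) + 1) * (-1) ^ (n + 1)) = 1 := by
    rw [← hu, ← C_mul, u.inv_mul, C_1]
  refine ⟨C (↑u⁻¹ : R) * (X * L - ((n : R[X]) + 1) * (X ^ 2 + 4) * f),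
    C (↑u⁻¹ : R) * (L * (X ^ 2 + 4)), ?_⟩
  linear_combination C (↑u⁻¹ : R) * bezout + hCu

end fibPoly

theorem fib_poly_squarefree_general (p : ℕ) (hp : Odd p)
    (F : Type*) [Field F] [CharP F p] (m : ℕ) (hm : 0 < m) (hpm : ¬ p ∣ m) :
    Squarefree (fibPoly F m) := by
  obtain ⟨n, rfl⟩ := Nat.exists_eq_add_one_of_ne_zero hm.ne'
  have h₂ : (2 : F) ≠ 0 := Ring.two_ne_zero <| by
    rw [ringChar.eq F p]
    rintro rfl
    exact Nat.not_even_iff_odd.mpr hp even_two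
  have hn : ((n + 1 : ℕ) : F) ≠ 0 := (CharP.cast_eq_zero_iff F p _).not.mpr hpm
  exact (fibPoly.separable h₂.isUnit hn.isUnit).squarefree

theorem fib_poly_squarefree (p : ℕ) [Fact p.Prime] (hp : Odd p)
    (F : Type*) [Field F] [Fintype F] [CharP F p] (m : ℕ) (hm : 0 < m) (hpm : ¬ p ∣ m) :
    Squarefree (fibPoly F m) :=
  fib_poly_squarefree_general p hp F m hm hpm
end

section
/- Let p be an odd prime and n ≥ 1. Over a field of characteristic p, the Fibonacci polynomial F_n(T) reduced modulo T^2 + 4 equals (-1)^{(n-1)/2}·n if n is odd, and (-1)^{(n+2)/2}·(n/2)·T if n is even. -/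
open Polynomial

/-!
Reducing modulo `T ^ 2 + 4` means evaluating at a root `x` with `x ^ 2 = -4`. Running the
recurrence two steps at a time, `F_{2m+2} = x F_{2m+1} + F_{2m}` stays a multiple of `x` while
`F_{2m+3} = x F_{2m+2} + F_{2m+1}` picks up `x ^ 2 = -4`, which gives closed forms for
`F_{2m}(x)` and `F_{2m+1}(x)` over any commutative ring.
-/

section

variable {R A : Type*} [CommRing R] [CommRing A] [Algebra R A]

lemma aeval_fibPoly_add_two (x : A) (n : ℕ) :
    aeval x (fibPoly R (n + 2)) = x * aeval x (fibPoly R (n + 1)) + aeval x (fibPoly R n) := by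
  simp [fibPoly]

lemma aeval_fibPoly_of_sq_eq_neg_four {x : A} (hx : x ^ 2 = -4) (m : ℕ) :
    aeval x (fibPoly R (2 * m)) = (-1) ^ (m + 1) * m * x ∧
      aeval x (fibPoly R (2 * m + 1)) = (-1) ^ m * (2 * m + 1) := by
  induction m with
  | zero => simp [fibPoly]
  | succ m ih =>
    obtain ⟨h_even, h_odd⟩ := ih
    have h_even' :
        aeval x (fibPoly R (2 * (m + 1))) = (-1) ^ (m + 1 + 1) * ((m + 1 : ℕ) : A) * x := by
      rw [show 2 * (m + 1) = 2 * m + 2 by ring, aeval_fibPoly_add_two, h_even, h_odd]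
      push_cast
      ring
    refine ⟨h_even', ?_⟩
    rw [show 2 * (m + 1) + 1 = 2 * m + 1 + 2 by ring, aeval_fibPoly_add_two,
      show 2 * m + 1 + 1 = 2 * (m + 1) by ring, h_even', h_odd]
    push_cast
    linear_combination (-1) ^ (m + 2) * ((m : A) + 1) * hx

lemma AdjoinRoot.root_X_sq_add_C_sq (a : R) :
    AdjoinRoot.root (X ^ 2 + C a) ^ 2 = -AdjoinRoot.of (X ^ 2 + C a) a := by
  have := AdjoinRoot.aeval_eq (f := X ^ 2 + C a) (X ^ 2 + C a)
  rw [AdjoinRoot.mk_self, map_add, map_pow, aeval_X, aeval_C] at this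
  exact eq_neg_of_add_eq_zero_left this

end

theorem fib_poly_mod_X_sq_add_four_general (p : ℕ) (hp : Odd p)
    (K : Type*) [Field K] [CharP K p] (n : ℕ) :
    (X ^ 2 + C 4 : Polynomial K) ∣
      (fibPoly K n -
        (if Odd n then C ((-1) ^ ((n - 1) / 2) * (n : K))
         else C ((-1) ^ ((n + 2) / 2) * (n : K) / 2) * X)) := by
  have h2 : (2 : K) ≠ 0 := Ring.two_ne_zero <| by
    rw [ringChar.eq K p]
    rintro rfl
    exact Nat.not_odd_iff_even.mpr even_two hp
  set f : K[X] := X ^ 2 + C 4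
  have hroot : AdjoinRoot.root f ^ 2 = -4 := by
    simpa only [map_ofNat] using AdjoinRoot.root_X_sq_add_C_sq (4 : K)
  rw [← AdjoinRoot.mk_eq_zero, map_sub, ← AdjoinRoot.aeval_eq, ← AdjoinRoot.aeval_eq,
    sub_eq_zero]
  obtain ⟨m, rfl | rfl⟩ := Nat.even_or_odd' n
  · have hcoef : (-1 : K) ^ ((2 * m + 2) / 2) * ((2 * m : ℕ) : K) / 2 = (-1) ^ (m + 1) * m := by
      rw [show (2 * m + 2) / 2 = m + 1 by omega]
      push_cast
      field_simp
    rw [if_neg (Nat.not_odd_iff_even.mpr (even_two_mul m)), hcoef,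
      (aeval_fibPoly_of_sq_eq_neg_four hroot m).1]
    simp
  · rw [if_pos (odd_two_mul_add_one m), show (2 * m + 1 - 1) / 2 = m by omega,
      (aeval_fibPoly_of_sq_eq_neg_four hroot m).2]
    simp [map_ofNat]

theorem fib_poly_mod_X_sq_add_four (p : ℕ) [Fact p.Prime] (hp : Odd p)
    (K : Type*) [Field K] [CharP K p] (n : ℕ) (hn : 1 ≤ n) :
    (X ^ 2 + C 4 : Polynomial K) ∣
      (fibPoly K n -
        (if Odd n then C ((-1) ^ ((n - 1) / 2) * (n : K))
         else C ((-1) ^ ((n + 2) / 2) * (n : K) / 2) * X)) :=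
  fib_poly_mod_X_sq_add_four_general p hp K n
end

section
/- Let q be a power of 2 and n ≥ 1. Then the Fibonacci polynomial F_n(T) is a square in F_q[T] if and only if n is odd. -/
/-!
Squaring is additive in characteristic 2, so the doubling formula
`F_{2k+1} = F_{k+1}^2 + F_k^2` exhibits `F_{2k+1} = (F_{k+1} + F_k)^2`. Conversely `F_n` is monic of
degree `n - 1`, which is odd when `n` is even, whereas squares have even degree.
-/

open Polynomial

section CommRing

variable (R : Type*) [CommRing R]

@[simp] lemma fibPoly_zero : fibPoly R 0 = 0 := rfl

@[simp] lemma fibPoly_one : fibPoly R 1 = 1 := rfl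

lemma fibPoly_add_two (n : ℕ) : fibPoly R (n + 2) = X * fibPoly R (n + 1) + fibPoly R n := rfl

lemma fibPoly_add_add_one (m n : ℕ) :
    fibPoly R (m + n + 1) = fibPoly R (m + 1) * fibPoly R (n + 1) + fibPoly R m * fibPoly R n := by
  induction n using Nat.twoStepInduction with
  | zero => simp
  | one => simp [fibPoly_add_two]; ring
  | more n ih₀ ih₁ =>
    rw [show m + (n + 2) + 1 = m + n + 1 + 2 by omega, fibPoly_add_two,
      show m + n + 1 + 1 = m + (n + 1) + 1 by omega, ih₁, ih₀, fibPoly_add_two R (n + 1),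
      fibPoly_add_two R n]
    ring

lemma fibPoly_two_mul_add_one (k : ℕ) :
    fibPoly R (2 * k + 1) = fibPoly R (k + 1) ^ 2 + fibPoly R k ^ 2 := by
  rw [two_mul, fibPoly_add_add_one, sq, sq]

lemma fibPoly_two_mul_add_one_eq_sq [CharP R 2] (k : ℕ) :
    fibPoly R (2 * k + 1) = (fibPoly R (k + 1) + fibPoly R k) ^ 2 := by
  rw [fibPoly_two_mul_add_one, CharTwo.add_sq]

lemma monic_fibPoly_succ_and_natDegree [Nontrivial R] (n : ℕ) :
    (fibPoly R (n + 1)).Monic ∧ (fibPoly R (n + 1)).natDegree = n := by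
  induction n using Nat.twoStepInduction with
  | zero => simp
  | one => simp [fibPoly_add_two]
  | more n ih₀ ih₁ =>
    obtain ⟨hmonic₀, hdeg₀⟩ := ih₀
    obtain ⟨hmonic₁, hdeg₁⟩ := ih₁
    have hmonicX : (X * fibPoly R (n + 2)).Monic := monic_X.mul hmonic₁
    have hdegX : (X * fibPoly R (n + 2)).natDegree = n + 2 := by
      rw [monic_X.natDegree_mul hmonic₁, natDegree_X, hdeg₁, add_comm]
    have hlt : (fibPoly R (n + 1)).degree < (X * fibPoly R (n + 2)).degree :=
      degree_lt_degree (by omega)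
    rw [fibPoly_add_two]
    exact ⟨hmonicX.add_of_left hlt, by rw [natDegree_add_eq_left_of_degree_lt hlt, hdegX]⟩

lemma natDegree_fibPoly_succ [Nontrivial R] (n : ℕ) : (fibPoly R (n + 1)).natDegree = n :=
  (monic_fibPoly_succ_and_natDegree R n).2

end CommRing

theorem fib_poly_square_iff_odd_char_two_general (F : Type*) [Field F] [CharP F 2]
    (n : ℕ) (hn : 1 ≤ n) :
    (∃ g : Polynomial F, fibPoly F n = g ^ 2) ↔ Odd n := by
  obtain ⟨m, rfl⟩ := Nat.exists_eq_add_of_le' hn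
  constructor
  · rintro ⟨g, hg⟩
    have hm : m = 2 * g.natDegree := by rw [← natDegree_fibPoly_succ F m, hg, natDegree_pow]
    exact ⟨g.natDegree, by omega⟩
  · rintro ⟨k, hk⟩
    obtain rfl : m = 2 * k := by omega
    exact ⟨_, fibPoly_two_mul_add_one_eq_sq F k⟩

theorem fib_poly_square_iff_odd_char_two (F : Type*) [Field F] [Fintype F] [CharP F 2]
    (n : ℕ) (hn : 1 ≤ n) :
    (∃ g : Polynomial F, fibPoly F n = g ^ 2) ↔ Odd n :=
  fib_poly_square_iff_odd_char_two_general F n hn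
end
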